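/- Let n ≥ 7 and let R be a weakly PIC algebraic curvature operator on ℝⁿ. Then the Ricci tensor of R is 3-nonnegative: for any orthonormal vectors x, y, z ∈ ℝⁿ one has xᵀ·Ric·x + yᵀ·Ric·y + zᵀ·Ric·z ≥ 0; equivalently, the sum of the three smallest eigenvalues of Ric (counted with multiplicity) is nonnegative. -/

import Mathlib

open Matrix BigOperators Finset

/-- An algebraic curvature operator on ℝⁿ: symmetries and first Bianchi identity. -/
def IsCurvOp (n : ℕ) (R : Fin n → Fin n → Fin n → Fin n → ℝ) : Prop :=
  (∀ i j k l, R i j k l = - R j i k l) ∧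
  (∀ i j k l, R i j k l = - R i j l k) ∧
  (∀ i j k l, R i j k l = R k l i j) ∧
  (∀ i j k l, R i j k l + R j k i l + R k i j l = 0)

/-- The complex-bilinear extension of the curvature form to `so(n,ℂ)`. -/
noncomputable def rformC {n : ℕ} (R : Fin n → Fin n → Fin n → Fin n → ℝ)
    (v w : Matrix (Fin n) (Fin n) ℂ) : ℂ :=
  (1/4) * ∑ i, ∑ j, ∑ k, ∑ l, (R i j k l : ℂ) * v i j * w k l

/-- The Ricci tensor of a curvature operator. -/
noncomputable def ricci {n : ℕ} (R : Fin n → Fin n → Fin n → Fin n → ℝ) :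
    Matrix (Fin n) (Fin n) ℝ :=
  Matrix.of fun a b => ∑ i, R i a i b

/-- The scalar curvature of a curvature operator. -/
noncomputable def scal {n : ℕ} (R : Fin n → Fin n → Fin n → Fin n → ℝ) : ℝ :=
  ∑ a, ricci R a a

/-- Entrywise complex conjugate of a matrix. -/
noncomputable def mconj {n : ℕ} (v : Matrix (Fin n) (Fin n) ℂ) : Matrix (Fin n) (Fin n) ℂ :=
  v.map (starRingEnd ℂ)


/-!
For orthonormal `a, b, c, d` and `s = ±1`, the vectors `ξ = a + i b` and `η = c + i s d` span a
totally isotropic plane, so `ξ ∧ η` has rank 2 and square zero and weak PIC gives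
`Re R(ξ, η, ξ̄, η̄) ≥ 0`. Adding the cases `s = 1` and `s = -1` cancels the terms odd in `d` and
leaves `K(a,c) + K(a,d) + K(b,c) + K(b,d) ≥ 0` for the sectional curvatures `K`.

Extend `x, y, z` to an orthonormal basis `e₀ = x, e₁ = y, e₂ = z, e₃, …`. With
`S p = K(e₀,e_p) + K(e₁,e_p) + K(e₂,e_p)` and `P = K(e₀,e₁) + K(e₀,e₂) + K(e₁,e₂)`,
`Ric(x,x) + Ric(y,y) + Ric(z,z) = 2 P + ∑_{p ≥ 3} S p`, and three instances of the frame inequality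
give `P + S p ≥ 0` and `S p + S q ≥ 0` for distinct `p, q ≥ 3`. Splitting off `P + S p` and
`P + S q`, with `p` minimising `S`, leaves a sum of nonnegative terms.
-/

lemma Finset.sum_add_two_mul_nonneg {α : Type*} [DecidableEq α] {O : Finset α}
    (hO : 2 ≤ O.card) (g : α → ℝ) (c : ℝ) (hc : ∀ p ∈ O, 0 ≤ c + g p)
    (hg : ∀ p ∈ O, ∀ q ∈ O, p ≠ q → 0 ≤ g p + g q) :
    0 ≤ ∑ p ∈ O, g p + 2 * c := by
  obtain ⟨p, hp, hmin⟩ := O.exists_min_image g (Finset.card_pos.mp (by omega))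
  obtain ⟨q, hq⟩ : (O.erase p).Nonempty :=
    Finset.card_pos.mp (by rw [Finset.card_erase_of_mem hp]; omega)
  -- `p` minimises `g`, so every other `g r` is at least `|g p|`
  have hrest : 0 ≤ ∑ r ∈ (O.erase p).erase q, g r := by
    refine Finset.sum_nonneg fun r hr => ?_
    have hrO := Finset.mem_of_mem_erase (Finset.mem_of_mem_erase hr)
    have := hg p hp r hrO (Finset.ne_of_mem_erase (Finset.mem_of_mem_erase hr)).symm
    linarith [hmin r hrO]
  rw [← Finset.add_sum_erase O g hp, ← Finset.add_sum_erase _ g hq]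
  linarith [hc p hp, hc q (Finset.mem_of_mem_erase hq)]

lemma sum_three_columns_nonneg_of_frame_nonneg {ι : Type*} [Fintype ι] [DecidableEq ι]
    (hcard : 5 ≤ Fintype.card ι) (K : ι → ι → ℝ) (hsym : ∀ p q, K p q = K q p)
    (hdiag : ∀ p, K p p = 0)
    (hF : ∀ a b c d : ι, a ≠ b → a ≠ c → a ≠ d → b ≠ c → b ≠ d → c ≠ d →
      0 ≤ K a c + K a d + K b c + K b d)
    {i₀ i₁ i₂ : ι} (h₀₁ : i₀ ≠ i₁) (h₀₂ : i₀ ≠ i₂) (h₁₂ : i₁ ≠ i₂) :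
    0 ≤ ∑ p, K p i₀ + ∑ p, K p i₁ + ∑ p, K p i₂ := by
  set S : ι → ℝ := fun p => K i₀ p + K i₁ p + K i₂ p
  set O := ((univ.erase i₀).erase i₁).erase i₂
  have hm₀ : i₀ ∈ univ := mem_univ _
  have hm₁ : i₁ ∈ univ.erase i₀ := mem_erase.mpr ⟨h₀₁.symm, mem_univ _⟩
  have hm₂ : i₂ ∈ (univ.erase i₀).erase i₁ :=
    mem_erase.mpr ⟨h₁₂.symm, mem_erase.mpr ⟨h₀₂.symm, mem_univ _⟩⟩
  have hO : O.card = Fintype.card ι - 3 := by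
    simp only [O, card_erase_of_mem hm₂, card_erase_of_mem hm₁, card_erase_of_mem hm₀, card_univ]
    omega
  have hmemO : ∀ p ∈ O, p ≠ i₀ ∧ p ≠ i₁ ∧ p ≠ i₂ := fun p hp => by
    simp only [O, mem_erase] at hp
    exact ⟨hp.2.2.1, hp.2.1, hp.1⟩
  have hsum : ∑ p, K p i₀ + ∑ p, K p i₁ + ∑ p, K p i₂
      = ∑ p ∈ O, S p + 2 * (K i₀ i₁ + K i₀ i₂ + K i₁ i₂) := by
    have hrow : ∀ i, ∑ p, K p i = ∑ p, K i p := fun i => sum_congr rfl fun p _ => hsym p i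
    rw [hrow, hrow, hrow, ← sum_add_distrib, ← sum_add_distrib, ← add_sum_erase _ _ hm₀,
      ← add_sum_erase _ _ hm₁, ← add_sum_erase _ _ hm₂]
    simp only [hdiag]
    linarith [hsym i₁ i₀, hsym i₂ i₀, hsym i₂ i₁]
  rw [hsum]
  refine sum_add_two_mul_nonneg (by omega) S _ (fun p hp => ?_) fun p hp q hq hpq => ?_
  · obtain ⟨hp₀, hp₁, hp₂⟩ := hmemO p hp
    have := hF i₀ i₁ i₂ p h₀₁ h₀₂ hp₀.symm h₁₂ hp₁.symm hp₂.symm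
    have := hF i₀ i₂ i₁ p h₀₂ h₀₁ hp₀.symm h₁₂.symm hp₂.symm hp₁.symm
    have := hF i₁ i₂ i₀ p h₁₂ h₀₁.symm hp₁.symm h₀₂.symm hp₂.symm hp₀.symm
    simp only [S]
    linarith [hsym i₁ i₀, hsym i₂ i₀, hsym i₂ i₁]
  · obtain ⟨hp₀, hp₁, hp₂⟩ := hmemO p hp
    obtain ⟨hq₀, hq₁, hq₂⟩ := hmemO q hq
    have := hF i₀ i₁ p q h₀₁ hp₀.symm hq₀.symm hp₁.symm hq₁.symm hpq
    have := hF i₀ i₂ p q h₀₂ hp₀.symm hq₀.symm hp₂.symm hq₂.symm hpq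
    have := hF i₁ i₂ p q h₁₂ hp₁.symm hq₁.symm hp₂.symm hq₂.symm hpq
    simp only [S]
    linarith

lemma star_ofReal_comp {ι : Type*} (v : ι → ℝ) :
    star (Complex.ofReal ∘ v) = Complex.ofReal ∘ v := by
  ext; simp

lemma ofReal_comp_dotProduct {ι : Type*} [Fintype ι] (u v : ι → ℝ) :
    (Complex.ofReal ∘ u) ⬝ᵥ (Complex.ofReal ∘ v) = ((u ⬝ᵥ v : ℝ) : ℂ) := by
  simp [dotProduct]

namespace Matrix

variable {ι : Type*}

def wedge {α : Type*} [CommRing α] (ξ η : ι → α) : Matrix ι ι α :=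
  vecMulVec ξ η - vecMulVec η ξ

section CommRing

variable {α : Type*} [CommRing α]

lemma transpose_wedge (ξ η : ι → α) : (wedge ξ η)ᵀ = -wedge ξ η := by
  simp [wedge]

variable [Fintype ι]

lemma wedge_mulVec (ξ η u : ι → α) : wedge ξ η *ᵥ u = (η ⬝ᵥ u) • ξ - (ξ ⬝ᵥ u) • η := by
  simp [wedge, sub_mulVec, vecMulVec_mulVec]

lemma wedge_mul_self_eq_zero {ξ η : ι → α} (hξ : ξ ⬝ᵥ ξ = 0) (hη : η ⬝ᵥ η = 0)
    (hξη : ξ ⬝ᵥ η = 0) : wedge ξ η * wedge ξ η = 0 := by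
  simp [wedge, sub_mul, mul_sub, vecMulVec_mul_vecMulVec, hξ, hη, hξη, dotProduct_comm η ξ]

end CommRing

lemma map_wedge_star (ξ η : ι → ℂ) :
    (wedge ξ η).map (starRingEnd ℂ) = wedge (star ξ) (star η) := by
  ext i j
  simp [wedge, vecMulVec_apply]

lemma rank_wedge [Fintype ι] {ξ η : ι → ℂ} (hξ : ξ ⬝ᵥ star ξ ≠ 0) (hη : η ⬝ᵥ star η ≠ 0)
    (hξη : ξ ⬝ᵥ star η = 0) : (wedge ξ η).rank = 2 := by
  have hηξ : η ⬝ᵥ star ξ = 0 := by rw [dotProduct_star, hξη, star_zero]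
  have hli : LinearIndependent ℂ ![ξ, η] := by
    refine LinearIndependent.pair_iff.mpr fun s t hst => ?_
    have h₁ := congrArg (· ⬝ᵥ star ξ) hst
    have h₂ := congrArg (· ⬝ᵥ star η) hst
    simp only [add_dotProduct, smul_dotProduct, hηξ, hξη, smul_eq_mul, mul_zero, add_zero,
      zero_add, zero_dotProduct, mul_eq_zero] at h₁ h₂
    exact ⟨h₁.resolve_right hξ, h₂.resolve_right hη⟩
  have hrange : LinearMap.range (wedge ξ η).mulVecLin = Submodule.span ℂ (Set.range ![ξ, η]) := by
    refine le_antisymm ?_ ?_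
    · rintro _ ⟨u, rfl⟩
      rw [mulVecLin_apply, wedge_mulVec, Matrix.range_cons, Matrix.range_cons, Matrix.range_empty]
      simp only [Set.union_empty, Set.singleton_union, sub_eq_add_neg, ← neg_smul]
      exact Submodule.mem_span_pair.mpr ⟨_, _, rfl⟩
    · rw [Submodule.span_le]
      rintro _ ⟨i, rfl⟩
      fin_cases i
      · exact ⟨(η ⬝ᵥ star η)⁻¹ • star η, by simp [wedge_mulVec, hξη, hη]⟩
      · exact ⟨-(ξ ⬝ᵥ star ξ)⁻¹ • star ξ, by simp [wedge_mulVec, hηξ, hξ]⟩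
  rw [rank, hrange, finrank_span_eq_card hli, Fintype.card_fin]

lemma exists_orthogonal_extension {m n : ℕ} (hmn : m ≤ n) (v : Fin m → Fin n → ℝ)
    (hv : ∀ p q, v p ⬝ᵥ v q = if p = q then 1 else 0) :
    ∃ e : Matrix (Fin n) (Fin n) ℝ, e * eᵀ = 1 ∧ ∀ p, e (Fin.castLE hmn p) = v p := by
  let w : Fin n → EuclideanSpace ℝ (Fin n) := fun i =>
    if h : (i : ℕ) < m then WithLp.toLp 2 (v ⟨i, h⟩) else 0
  have hw : Orthonormal ℝ ((Set.range (Fin.castLE hmn)).domRestrict w) := by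
    rw [orthonormal_iff_ite]
    rintro ⟨_, p, rfl⟩ ⟨_, q, rfl⟩
    simp only [Set.domRestrict_apply, w, Fin.val_castLE, p.isLt, q.isLt, dif_pos, Fin.eta,
      EuclideanSpace.inner_eq_star_dotProduct, Subtype.ext_iff, Fin.castLE_inj, star_trivial]
    rw [dotProduct_comm, hv]
  obtain ⟨b, hb⟩ := hw.exists_orthonormalBasis_extension_of_card_eq (by simp)
  refine ⟨Matrix.of fun p i => b p i, ?_, fun p => ?_⟩
  · ext p q
    simpa [mul_apply, EuclideanSpace.inner_eq_star_dotProduct, dotProduct, mul_comm, one_apply]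
      using orthonormal_iff_ite.mp b.orthonormal p q
  · ext i
    simp [hb _ ⟨p, rfl⟩, w]

end Matrix

namespace CurvOp

variable {n : ℕ} {𝕜 : Type*} [CommRing 𝕜] [Algebra ℝ 𝕜]

noncomputable def curvForm (R : Fin n → Fin n → Fin n → Fin n → ℝ) (w x y z : Fin n → 𝕜) : 𝕜 :=
  ∑ i, ∑ j, ∑ k, ∑ l, algebraMap ℝ 𝕜 (R i j k l) * w i * x j * y k * z l

section Multilinear

variable (R : Fin n → Fin n → Fin n → Fin n → ℝ) (w w' x x' y y' z z' : Fin n → 𝕜) (s : 𝕜)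

@[simp] lemma curvForm_add₁ :
    curvForm R (w + w') x y z = curvForm R w x y z + curvForm R w' x y z := by
  simp only [curvForm, Pi.add_apply, mul_add, add_mul, sum_add_distrib]

@[simp] lemma curvForm_add₂ :
    curvForm R w (x + x') y z = curvForm R w x y z + curvForm R w x' y z := by
  simp only [curvForm, Pi.add_apply, mul_add, add_mul, sum_add_distrib]

@[simp] lemma curvForm_add₃ :
    curvForm R w x (y + y') z = curvForm R w x y z + curvForm R w x y' z := by
  simp only [curvForm, Pi.add_apply, mul_add, add_mul, sum_add_distrib]

@[simp] lemma curvForm_add₄ :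
    curvForm R w x y (z + z') = curvForm R w x y z + curvForm R w x y z' := by
  simp only [curvForm, Pi.add_apply, mul_add, sum_add_distrib]

@[simp] lemma curvForm_smul₁ : curvForm R (s • w) x y z = s * curvForm R w x y z := by
  simp only [curvForm, Pi.smul_apply, smul_eq_mul, mul_sum]
  congr! 4 with i - j - k - l -; ring

@[simp] lemma curvForm_smul₂ : curvForm R w (s • x) y z = s * curvForm R w x y z := by
  simp only [curvForm, Pi.smul_apply, smul_eq_mul, mul_sum]
  congr! 4 with i - j - k - l -; ring

@[simp] lemma curvForm_smul₃ : curvForm R w x (s • y) z = s * curvForm R w x y z := by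
  simp only [curvForm, Pi.smul_apply, smul_eq_mul, mul_sum]
  congr! 4 with i - j - k - l -; ring

@[simp] lemma curvForm_smul₄ : curvForm R w x y (s • z) = s * curvForm R w x y z := by
  simp only [curvForm, Pi.smul_apply, smul_eq_mul, mul_sum]
  congr! 4 with i - j - k - l -; ring

end Multilinear

lemma curvForm_ofReal (R : Fin n → Fin n → Fin n → Fin n → ℝ) (w x y z : Fin n → ℝ) :
    curvForm R (Complex.ofReal ∘ w) (Complex.ofReal ∘ x) (Complex.ofReal ∘ y) (Complex.ofReal ∘ z)
      = ((curvForm R w x y z : ℝ) : ℂ) := by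
  simp [curvForm]

variable {R : Fin n → Fin n → Fin n → Fin n → ℝ}

lemma curvForm_swap_left (h : ∀ i j k l, R i j k l = - R j i k l) (w x y z : Fin n → 𝕜) :
    curvForm R x w y z = - curvForm R w x y z := by
  simp only [curvForm, ← sum_neg_distrib]
  rw [sum_comm]
  congr! 4 with i - j - k - l -
  rw [h j i k l, map_neg]
  ring

lemma curvForm_swap_right (h : ∀ i j k l, R i j k l = - R i j l k) (w x y z : Fin n → 𝕜) :
    curvForm R w x z y = - curvForm R w x y z := by
  simp only [curvForm, ← sum_neg_distrib]
  congr! 2 with i - j -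
  rw [sum_comm]
  congr! 2 with k - l -
  rw [h i j l k, map_neg]
  ring

lemma curvForm_comm_pairs (h₁ : ∀ i j k l, R i j k l = - R j i k l)
    (h₂ : ∀ i j k l, R i j k l = - R i j l k) (u w : Fin n → ℝ) :
    curvForm R u w u w = curvForm R w u w u := by
  rw [curvForm_swap_left h₁, curvForm_swap_right h₂, neg_neg]

lemma curvForm_self_left (h₁ : ∀ i j k l, R i j k l = - R j i k l) (u y z : Fin n → ℝ) :
    curvForm R u u y z = 0 := by
  linarith [curvForm_swap_left h₁ u u y z]

lemma sum_curvForm_eq_ricci {e : Matrix (Fin n) (Fin n) ℝ} (he : eᵀ * e = 1) (u w : Fin n → ℝ) :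
    ∑ p, curvForm R (e p) u (e p) w = u ⬝ᵥ ricci R *ᵥ w := by
  have hδ : ∀ i k, ∑ p, e p i * e p k = if i = k then 1 else 0 := fun i k => by
    rw [← one_apply, ← he, mul_apply]; rfl
  calc ∑ p, curvForm R (e p) u (e p) w
      = ∑ i, ∑ j, ∑ k, ∑ l, R i j k l * u j * w l * ∑ p, e p i * e p k := by
        simp only [curvForm, Algebra.algebraMap_self, RingHom.id_apply, mul_sum]
        rw [sum_comm]; congr! 1 with i -
        rw [sum_comm]; congr! 1 with j -
        rw [sum_comm]; congr! 1 with k -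
        rw [sum_comm]; congr! 2 with l - p -
        ring
    _ = ∑ i, ∑ j, ∑ l, R i j i l * u j * w l := by
        simp [hδ]
    _ = u ⬝ᵥ ricci R *ᵥ w := by
        simp only [dotProduct, mulVec, ricci, of_apply, mul_sum, sum_mul]
        rw [sum_comm]; congr! 1 with j -
        rw [sum_comm]; congr! 2 with l - i -
        ring

lemma rformC_wedge (h₁ : ∀ i j k l, R i j k l = - R j i k l)
    (h₂ : ∀ i j k l, R i j k l = - R i j l k) (ξ η ζ ω : Fin n → ℂ) :
    rformC R (wedge ξ η) (wedge ζ ω) = curvForm R ξ η ζ ω := by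
  have hexp : rformC R (wedge ξ η) (wedge ζ ω) = (1 / 4) *
      (curvForm R ξ η ζ ω - curvForm R ξ η ω ζ - curvForm R η ξ ζ ω + curvForm R η ξ ω ζ) := by
    simp only [rformC, curvForm, wedge, Matrix.sub_apply, vecMulVec_apply, Complex.coe_algebraMap,
      ← sum_sub_distrib, ← sum_add_distrib]
    congr! 5 with i - j - k - l -
    ring
  rw [hexp, curvForm_swap_left h₁ ξ η ω ζ, curvForm_swap_left h₁ ξ η ζ ω,
    curvForm_swap_right h₂ ξ η ζ ω]
  ring

lemma curvForm_re_nonneg_of_isotropic (h₁ : ∀ i j k l, R i j k l = - R j i k l)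
    (h₂ : ∀ i j k l, R i j k l = - R i j l k)
    (hpic : ∀ v : Matrix (Fin n) (Fin n) ℂ, vᵀ = -v → v.rank = 2 → v * v = 0 →
      0 ≤ (rformC R v (mconj v)).re)
    {ξ η : Fin n → ℂ} (hξ : ξ ⬝ᵥ ξ = 0) (hη : η ⬝ᵥ η = 0) (hξη : ξ ⬝ᵥ η = 0)
    (hξ' : ξ ⬝ᵥ star ξ ≠ 0) (hη' : η ⬝ᵥ star η ≠ 0) (hξη' : ξ ⬝ᵥ star η = 0) :
    0 ≤ (curvForm R ξ η (star ξ) (star η)).re := by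
  have := hpic (wedge ξ η) (transpose_wedge ξ η) (rank_wedge hξ' hη' hξη')
    (wedge_mul_self_eq_zero hξ hη hξη)
  rwa [mconj, map_wedge_star, rformC_wedge h₁ h₂] at this

lemma sectional_sum_nonneg (h₁ : ∀ i j k l, R i j k l = - R j i k l)
    (h₂ : ∀ i j k l, R i j k l = - R i j l k)
    (hpic : ∀ v : Matrix (Fin n) (Fin n) ℂ, vᵀ = -v → v.rank = 2 → v * v = 0 →
      0 ≤ (rformC R v (mconj v)).re)
    {e : Matrix (Fin n) (Fin n) ℝ} (he : e * eᵀ = 1) {a b c d : Fin n}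
    (hab : a ≠ b) (hac : a ≠ c) (had : a ≠ d) (hbc : b ≠ c) (hbd : b ≠ d) (hcd : c ≠ d) :
    0 ≤ curvForm R (e a) (e c) (e a) (e c) + curvForm R (e a) (e d) (e a) (e d)
      + curvForm R (e b) (e c) (e b) (e c) + curvForm R (e b) (e d) (e b) (e d) := by
  have hdot : ∀ p q, e p ⬝ᵥ e q = if p = q then 1 else 0 := fun p q => by
    rw [← one_apply, ← he, mul_apply]; rfl
  set ξ : Fin n → ℂ := Complex.ofReal ∘ e a + Complex.I • Complex.ofReal ∘ e b
  set η : ℝ → Fin n → ℂ := fun s => Complex.ofReal ∘ e c + (s * Complex.I) • Complex.ofReal ∘ e d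
  have hpic_η : ∀ s : ℝ, s ^ 2 = 1 → 0 ≤ (curvForm R ξ (η s) (star ξ) (star (η s))).re := by
    intro s hs
    have hsI : (s : ℂ) * Complex.I * (s * Complex.I) = -1 := by
      rw [mul_mul_mul_comm, Complex.I_mul_I, ← Complex.ofReal_mul, ← sq, hs]; simp
    refine curvForm_re_nonneg_of_isotropic h₁ h₂ hpic ?_ ?_ ?_ ?_ ?_ ?_ <;>
    simp [ξ, η, star_ofReal_comp, add_dotProduct, dotProduct_add, ofReal_comp_dotProduct, hdot, hsI,
      hab, hac, had, hbc, hbd, hcd, hab.symm, hcd.symm]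
  have hsum : (curvForm R ξ (η 1) (star ξ) (star (η 1))).re
      + (curvForm R ξ (η (-1)) (star ξ) (star (η (-1)))).re
      = 2 * (curvForm R (e a) (e c) (e a) (e c) + curvForm R (e a) (e d) (e a) (e d)
        + curvForm R (e b) (e c) (e b) (e c) + curvForm R (e b) (e d) (e b) (e d)) := by
    simp only [ξ, η, star_add, star_smul, star_ofReal_comp, Complex.star_def, map_mul,
      Complex.conj_I, Complex.conj_ofReal, curvForm_add₁, curvForm_add₂, curvForm_add₃,
      curvForm_add₄, curvForm_smul₁, curvForm_smul₂, curvForm_smul₃, curvForm_smul₄,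
      curvForm_ofReal]
    simp only [Complex.add_re, Complex.add_im, Complex.mul_re,
      Complex.mul_im, Complex.neg_re, Complex.neg_im, Complex.I_re, Complex.I_im, Complex.ofReal_re,
      Complex.ofReal_im]
    ring
  linarith [hpic_η 1 (by norm_num), hpic_η (-1) (by norm_num)]

end CurvOp

open CurvOp in
/-- if `n ≥ 7` and `R` is a weakly PIC algebraic curvature operator on ℝⁿ,
then the Ricci tensor of `R` is 3-nonnegative: for any orthonormal `x, y, z ∈ ℝⁿ`,
`xᵀ·Ric·x + yᵀ·Ric·y + zᵀ·Ric·z ≥ 0`. -/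
theorem stmt5 (n : ℕ) (hn : 7 ≤ n) (R : Fin n → Fin n → Fin n → Fin n → ℝ)
    (hR : IsCurvOp n R)
    -- weakly PIC: `R(v,v̄) ≥ 0` for every `v ∈ so(n,ℂ)` with rank 2 and `v² = 0`
    (hpic : ∀ v : Matrix (Fin n) (Fin n) ℂ, vᵀ = -v → v.rank = 2 → v * v = 0 →
      0 ≤ (rformC R v (mconj v)).re) :
    ∀ x y z : Fin n → ℝ,
      x ⬝ᵥ x = 1 → y ⬝ᵥ y = 1 → z ⬝ᵥ z = 1 →
      x ⬝ᵥ y = 0 → x ⬝ᵥ z = 0 → y ⬝ᵥ z = 0 →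
      0 ≤ x ⬝ᵥ (ricci R).mulVec x + y ⬝ᵥ (ricci R).mulVec y + z ⬝ᵥ (ricci R).mulVec z := by
  intro x y z hxx hyy hzz hxy hxz hyz
  obtain ⟨h₁, h₂, -, -⟩ := hR
  have h3n : 3 ≤ n := by omega
  obtain ⟨e, he, hext⟩ := exists_orthogonal_extension h3n ![x, y, z] fun p q => by
    fin_cases p <;> fin_cases q <;> simp [dotProduct_comm, hxx, hyy, hzz, hxy, hxz, hyz]
  obtain rfl : x = e (Fin.castLE h3n 0) := (hext 0).symm
  obtain rfl : y = e (Fin.castLE h3n 1) := (hext 1).symm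
  obtain rfl : z = e (Fin.castLE h3n 2) := (hext 2).symm
  simp only [← sum_curvForm_eq_ricci (mul_eq_one_comm.mp he)]
  exact sum_three_columns_nonneg_of_frame_nonneg (by rw [Fintype.card_fin]; omega)
    (fun p q => curvForm R (e p) (e q) (e p) (e q)) (fun p q => curvForm_comm_pairs h₁ h₂ _ _)
    (fun p => curvForm_self_left h₁ _ _ _) (fun a b c d => sectional_sum_nonneg h₁ h₂ hpic he)
    (by simp [Fin.ext_iff]) (by simp [Fin.ext_iff]) (by simp [Fin.ext_iff])
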